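/- Theorem 1 (entropy bound in Bilateral Grand Lebesgue norm). Let ψ, ν, ζ ∈ Ψ(a,b) with ζ(p) = ψ(p)·ν(p) for all p ∈ (a,b). Let T be a countable set and for each t ∈ T let Y(t) : X → ℝ be measurable with ‖Y(t)‖_{G(ψ)} < ∞; write d_ψ(t,s) = ‖Y(t) − Y(s)‖_{G(ψ)}. Let θ ∈ (0,1) and suppose (F_k)_{k≥0} is a nondecreasing sequence of finite subsets of T with ⋃_k F_k = T, F_0 = {t_0}, card(F_k) = N_k, and such that for every k ≥ 0 the set F_k is a θ^k-net of (T, d_ψ). Then ‖sup_{t∈T} Y(t)‖_{G(ζ)} ≤ ‖Y(t_0)‖_{G(ψ)} + Σ_{k=1}^∞ θ^{k−1} φ_ν(N_k), where φ_ν(m) = sup_{p∈(a,b)} m^{1/p}/ν(p) and sup_{t∈T} Y(t) denotes the pointwise supremum. -/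

import Mathlib

open MeasureTheory ENNReal Set

noncomputable section

/-- The set of exponents p with a < p and p < b (b may be infinite). -/
def expSet (a : ℝ) (b : ℝ≥0∞) : Set ℝ := {p : ℝ | a < p ∧ ENNReal.ofReal p < b}

/-- The class Ψ(a,b). -/
structure IsPsi (a : ℝ) (b : ℝ≥0∞) (ψ : ℝ → ℝ) : Prop where
  one_le : ∀ p ∈ expSet a b, 1 ≤ ψ p
  bddOnCompacts : ∀ c d : ℝ, c ∈ expSet a b → d ∈ expSet a b → BddAbove (ψ '' Set.Icc c d)
  logConvex : ConvexOn ℝ (expSet a b) fun p => Real.log (ψ p)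

/-- L^p norm (real exponent). -/
def lpNorm {X : Type*} [MeasurableSpace X] (μ : Measure X) (f : X → ℝ) (p : ℝ) : ℝ≥0∞ :=
  (∫⁻ x, ENNReal.ofReal (|f x| ^ p) ∂μ) ^ (1 / p)

/-- Bilateral Grand Lebesgue norm. -/
def glNorm {X : Type*} [MeasurableSpace X] (μ : Measure X) (a : ℝ) (b : ℝ≥0∞) (ψ : ℝ → ℝ)
    (f : X → ℝ) : ℝ≥0∞ :=
  ⨆ p ∈ expSet a b, lpNorm μ f p / ENNReal.ofReal (ψ p)

/-- L^p norm for extended-real-valued functions. -/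
def lpNormE {X : Type*} [MeasurableSpace X] (μ : Measure X) (g : X → EReal) (p : ℝ) : ℝ≥0∞ :=
  (∫⁻ x, (g x).abs ^ p ∂μ) ^ (1 / p)

/-- Bilateral Grand Lebesgue norm for extended-real-valued functions. -/
def glNormE {X : Type*} [MeasurableSpace X] (μ : Measure X) (a : ℝ) (b : ℝ≥0∞) (ψ : ℝ → ℝ)
    (g : X → EReal) : ℝ≥0∞ :=
  ⨆ p ∈ expSet a b, lpNormE μ g p / ENNReal.ofReal (ψ p)

/-- L^p norm for `ℝ≥0∞`-valued functions. -/
def lpNormNN {X : Type*} [MeasurableSpace X] (μ : Measure X) (g : X → ℝ≥0∞) (p : ℝ) : ℝ≥0∞ :=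
  (∫⁻ x, g x ^ p ∂μ) ^ (1 / p)

end

/-! Chaining. For each level `k` pick a point `π k t` of the `θ ^ k`-net `F k` near `t`.
Telescoping from `t ∈ F K` down to `F 0 = {t₀}` bounds `|Y t|` pointwise by `|Y t₀|` plus,
for every level, the largest link between the nets `F (k + 1)` and `F k`. Since the `p`-th power of
a maximum of `N` functions is at most their sum, the `L^p` norm of that maximum is at most
`N ^ (1 / p) θ ^ k ψ(p) ≤ φ_ν(N) ν(p) θ ^ k ψ(p)`; Minkowski's inequality and division by
`ζ(p) = ψ(p) ν(p)` give the bound uniformly in `p`. -/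

section LpNorm

variable {X : Type*} [MeasurableSpace X] (μ : Measure X) {p : ℝ}

theorem lpNormNN_eq_eLpNorm' (g : X → ℝ≥0∞) (p : ℝ) : lpNormNN μ g p = eLpNorm' g p μ := rfl

theorem lpNormNN_mono {g h : X → ℝ≥0∞} (hgh : ∀ x, g x ≤ h x) (hp : 0 ≤ p) :
    lpNormNN μ g p ≤ lpNormNN μ h p := by
  unfold lpNormNN
  gcongr with x
  exact hgh x

theorem lpNorm_eq_lpNormNN (f : X → ℝ) (hp : 0 ≤ p) :
    lpNorm μ f p = lpNormNN μ (fun x => ENNReal.ofReal |f x|) p := by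
  simp only [_root_.lpNorm, lpNormNN, ENNReal.ofReal_rpow_of_nonneg (abs_nonneg _) hp]

theorem lpNormE_le_lpNormNN {g : X → EReal} {h : X → ℝ≥0∞} (hgh : ∀ x, (g x).abs ≤ h x)
    (hp : 0 ≤ p) : lpNormE μ g p ≤ lpNormNN μ h p :=
  lpNormNN_mono μ hgh hp

theorem lpNormNN_add_le {g h : X → ℝ≥0∞} (hg : AEMeasurable g μ) (hh : AEMeasurable h μ)
    (hp : 1 ≤ p) : lpNormNN μ (g + h) p ≤ lpNormNN μ g p + lpNormNN μ h p :=
  ENNReal.lintegral_Lp_add_le hg hh hp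

theorem lpNormNN_iSup {g : ℕ → X → ℝ≥0∞} (hg : ∀ n, Measurable (g n)) (hmono : Monotone g)
    (hp : 0 < p) : lpNormNN μ (fun x => ⨆ n, g n x) p = ⨆ n, lpNormNN μ (g n) p := by
  have hpow : ∀ x, (⨆ n, g n x) ^ p = ⨆ n, g n x ^ p := fun x =>
    (ENNReal.orderIsoRpow p hp).map_iSup _
  simp only [lpNormNN, hpow]
  rw [lintegral_iSup (fun n => (hg n).pow_const p)
    (fun n m hnm x => ENNReal.rpow_le_rpow (hmono hnm x) hp.le)]
  exact (ENNReal.orderIsoRpow (1 / p) (one_div_pos.2 hp)).map_iSup _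

theorem lpNormNN_tsum_le {g : ℕ → X → ℝ≥0∞} (hg : ∀ n, Measurable (g n)) (hp : 1 ≤ p) :
    lpNormNN μ (fun x => ∑' n, g n x) p ≤ ∑' n, lpNormNN μ (g n) p := by
  have hpartial : ∀ n, Measurable fun x => ∑ k ∈ Finset.range n, g k x := fun n =>
    Finset.measurable_sum _ fun k _ => hg k
  have hmono : Monotone fun n x => ∑ k ∈ Finset.range n, g k x := fun n m hnm x =>
    Finset.sum_le_sum_of_subset (Finset.range_subset_range.2 hnm)
  simp only [ENNReal.tsum_eq_iSup_nat]
  rw [lpNormNN_iSup μ hpartial hmono (zero_lt_one.trans_le hp)]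
  refine iSup_le fun n => le_iSup_of_le n ?_
  simpa only [lpNormNN_eq_eLpNorm', Finset.sum_fn] using
    eLpNorm'_sum_le (μ := μ) (s := Finset.range n) (f := g)
      (fun k _ => (hg k).aestronglyMeasurable) hp

theorem lpNormNN_finset_sup_le {ι : Type*} (s : Finset ι) {g : ι → X → ℝ≥0∞}
    (hg : ∀ i ∈ s, Measurable (g i)) {C : ℝ≥0∞} (hC : ∀ i ∈ s, lpNormNN μ (g i) p ≤ C)
    (hp : 0 < p) :
    lpNormNN μ (fun x => s.sup fun i => g i x) p ≤ (s.card : ℝ≥0∞) ^ (1 / p) * C := by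
  have hsup_pow : ∀ x, (s.sup fun i => g i x) ^ p ≤ ∑ i ∈ s, g i x ^ p := fun x => by
    rcases s.eq_empty_or_nonempty with rfl | hs
    · simp [ENNReal.zero_rpow_of_pos hp]
    · obtain ⟨i, hi, hmax⟩ := s.exists_mem_eq_sup hs fun i => g i x
      rw [hmax]
      exact Finset.single_le_sum (f := fun i => g i x ^ p) (fun _ _ => zero_le) hi
  have hint : ∫⁻ x, (s.sup fun i => g i x) ^ p ∂μ ≤ s.card * C ^ p := calc
    _ ≤ ∫⁻ x, ∑ i ∈ s, g i x ^ p ∂μ := lintegral_mono hsup_pow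
    _ = ∑ i ∈ s, ∫⁻ x, g i x ^ p ∂μ :=
      lintegral_finsetSum _ fun i hi => (hg i hi).pow_const p
    _ ≤ ∑ i ∈ s, C ^ p := Finset.sum_le_sum fun i hi => by
      simpa only [lpNormNN, ← ENNReal.rpow_mul, one_div_mul_cancel hp.ne', ENNReal.rpow_one]
        using ENNReal.rpow_le_rpow (hC i hi) hp.le
    _ = s.card * C ^ p := by rw [Finset.sum_const, nsmul_eq_mul]
  calc lpNormNN μ (fun x => s.sup fun i => g i x) p ≤ (s.card * C ^ p) ^ (1 / p) :=
        ENNReal.rpow_le_rpow hint (one_div_pos.2 hp).le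
    _ = (s.card : ℝ≥0∞) ^ (1 / p) * C := by
      rw [ENNReal.mul_rpow_of_nonneg _ _ (one_div_pos.2 hp).le, ← ENNReal.rpow_mul,
        mul_one_div_cancel hp.ne', ENNReal.rpow_one]

end LpNorm

theorem EReal.abs_iSup_coe_le {ι : Type*} [Nonempty ι] (y : ι → ℝ) :
    (⨆ i, (y i : EReal)).abs ≤ ⨆ i, ENNReal.ofReal |y i| := by
  set c := ⨆ i, ENNReal.ofReal |y i|
  rcases eq_or_ne c ⊤ with hc | hc
  · simp [hc]
  have hy : ∀ i, |y i| ≤ c.toReal := fun i =>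
    (ENNReal.ofReal_le_iff_le_toReal hc).1 (le_iSup (fun i => ENNReal.ofReal |y i|) i)
  obtain ⟨i₀⟩ := ‹Nonempty ι›
  have hupper : ⨆ i, (y i : EReal) ≤ (c.toReal : EReal) :=
    iSup_le fun i => EReal.coe_le_coe_iff.2 (le_of_abs_le (hy i))
  have hlower : ((-c.toReal : ℝ) : EReal) ≤ ⨆ i, (y i : EReal) :=
    (EReal.coe_le_coe_iff.2 (neg_le_of_abs_le (hy i₀))).trans (le_iSup (fun i => (y i : EReal)) i₀)
  obtain ⟨r, hr⟩ : ∃ r : ℝ, (r : EReal) = ⨆ i, (y i : EReal) :=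
    ⟨_, EReal.coe_toReal (hupper.trans_lt (EReal.coe_lt_top _)).ne
      (ne_bot_of_le_ne_bot (EReal.coe_ne_bot _) hlower)⟩
  rw [← hr] at hupper hlower ⊢
  rw [EReal.abs_def, ← ENNReal.ofReal_toReal hc]
  exact ENNReal.ofReal_le_ofReal (abs_le.2 ⟨by exact_mod_cast hlower, by exact_mod_cast hupper⟩)

section Chaining

variable {T X : Type*} (Y : T → X → ℝ) (F : ℕ → Finset T) (π : ℕ → T → T)

def chainLink (k : ℕ) (x : X) : ℝ≥0∞ :=
  (F (k + 1)).sup fun u => ENNReal.ofReal |Y u x - Y (π k u) x|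

variable {Y F π}

theorem measurable_chainLink [MeasurableSpace X] (hY : ∀ t, Measurable (Y t)) (k : ℕ) :
    Measurable (chainLink Y F π k) := by
  have : chainLink Y F π k = (F (k + 1)).sup fun u x => ENNReal.ofReal |Y u x - Y (π k u) x| := by
    ext x; simp only [chainLink, Finset.sup_apply]
  rw [this]
  exact Finset.sup_induction measurable_const (fun _ hf _ hg => hf.sup hg)
    fun u _ => ((hY u).sub (hY _)).abs.ennreal_ofReal

theorem ofReal_abs_le_add_sum_chainLink {t₀ : T} (hF0 : F 0 = {t₀}) (hπ : ∀ k t, π k t ∈ F k)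
    (x : X) (K : ℕ) : ∀ t ∈ F K,
    ENNReal.ofReal |Y t x| ≤
      ENNReal.ofReal |Y t₀ x| + ∑ k ∈ Finset.range K, chainLink Y F π k x := by
  induction K with
  | zero =>
    intro t ht
    rw [hF0, Finset.mem_singleton] at ht
    simp [ht]
  | succ K ih =>
    intro t ht
    have hlink : ENNReal.ofReal |Y t x - Y (π K t) x| ≤ chainLink Y F π K x :=
      Finset.le_sup (f := fun u => ENNReal.ofReal |Y u x - Y (π K u) x|) ht
    calc ENNReal.ofReal |Y t x|
        ≤ ENNReal.ofReal (|Y (π K t) x| + |Y t x - Y (π K t) x|) :=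
          ENNReal.ofReal_le_ofReal (sub_le_iff_le_add'.1 (abs_sub_abs_le_abs_sub _ _))
      _ ≤ ENNReal.ofReal |Y (π K t) x| + ENNReal.ofReal |Y t x - Y (π K t) x| :=
          ENNReal.ofReal_add_le
      _ ≤ (ENNReal.ofReal |Y t₀ x| + ∑ k ∈ Finset.range K, chainLink Y F π k x) +
            chainLink Y F π K x :=
          add_le_add (ih _ (hπ K t)) hlink
      _ = _ := by rw [Finset.sum_range_succ, add_assoc]

theorem abs_iSup_le_add_tsum_chainLink {t₀ : T} (hF0 : F 0 = {t₀}) (hπ : ∀ k t, π k t ∈ F k)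
    (hcover : ∀ t, ∃ k, t ∈ F k) (x : X) :
    (⨆ t, (Y t x : EReal)).abs ≤ ENNReal.ofReal |Y t₀ x| + ∑' k, chainLink Y F π k x := by
  have : Nonempty T := ⟨t₀⟩
  refine (EReal.abs_iSup_coe_le fun t => Y t x).trans (iSup_le fun t => ?_)
  obtain ⟨K, hK⟩ := hcover t
  exact (ofReal_abs_le_add_sum_chainLink hF0 hπ x K t hK).trans
    (add_le_add_right (ENNReal.sum_le_tsum _) _)

variable [MeasurableSpace X] (μ : Measure X) {p : ℝ}

theorem lpNormNN_chainLink_le (hY : ∀ t, Measurable (Y t)) (hp : 0 < p) (k : ℕ) {C : ℝ≥0∞}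
    (hC : ∀ u ∈ F (k + 1), lpNorm μ (fun x => Y u x - Y (π k u) x) p ≤ C) :
    lpNormNN μ (chainLink Y F π k) p ≤ ((F (k + 1)).card : ℝ≥0∞) ^ (1 / p) * C :=
  lpNormNN_finset_sup_le μ _ (fun u _ => ((hY u).sub (hY _)).abs.ennreal_ofReal)
    (fun u hu => (lpNorm_eq_lpNormNN μ _ hp.le).symm.trans_le (hC u hu)) hp

theorem lpNormE_iSup_le_add_tsum_chainLink (hY : ∀ t, Measurable (Y t)) (hp : 1 ≤ p) {t₀ : T}
    (hF0 : F 0 = {t₀}) (hπ : ∀ k t, π k t ∈ F k) (hcover : ∀ t, ∃ k, t ∈ F k) :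
    lpNormE μ (fun x => ⨆ t, (Y t x : EReal)) p ≤
      lpNorm μ (Y t₀) p + ∑' k, lpNormNN μ (chainLink Y F π k) p := calc
  _ ≤ lpNormNN μ ((fun x => ENNReal.ofReal |Y t₀ x|) + fun x => ∑' k, chainLink Y F π k x) p :=
    lpNormE_le_lpNormNN μ (abs_iSup_le_add_tsum_chainLink hF0 hπ hcover) (zero_le_one.trans hp)
  _ ≤ _ := by
    grw [lpNormNN_add_le μ (hY t₀).abs.ennreal_ofReal.aemeasurable
      (Measurable.tsum (measurable_chainLink hY)).aemeasurable hp,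
      lpNormNN_tsum_le μ (measurable_chainLink hY) hp,
      lpNorm_eq_lpNormNN μ _ (zero_le_one.trans hp)]

end Chaining

theorem le_iSup₂_div_ofReal_mul {S : Set ℝ} (f : ℝ → ℝ≥0∞) {w : ℝ → ℝ} {p : ℝ} (hp : p ∈ S)
    (hw : 0 < w p) : f p ≤ (⨆ q ∈ S, f q / ENNReal.ofReal (w q)) * ENNReal.ofReal (w p) :=
  (ENNReal.div_le_iff (ENNReal.ofReal_pos.2 hw).ne' ENNReal.ofReal_ne_top).1
    (le_iSup₂ (f := fun q (_ : q ∈ S) => f q / ENNReal.ofReal (w q)) p hp)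

section GrandLebesgue

variable {X : Type*} [MeasurableSpace X] (μ : Measure X) {a : ℝ} {b : ℝ≥0∞}

theorem lpNorm_le_glNorm_mul {ψ : ℝ → ℝ} (f : X → ℝ) {p : ℝ} (hp : p ∈ expSet a b)
    (hψ : 0 < ψ p) : lpNorm μ f p ≤ glNorm μ a b ψ f * ENNReal.ofReal (ψ p) :=
  le_iSup₂_div_ofReal_mul _ hp hψ

theorem glNormE_le_of_forall_lpNormE_le {ζ : ℝ → ℝ} {g : X → EReal} {C : ℝ≥0∞}
    (h : ∀ p ∈ expSet a b, lpNormE μ g p ≤ C * ENNReal.ofReal (ζ p)) :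
    glNormE μ a b ζ g ≤ C :=
  iSup₂_le fun p hp => ENNReal.div_le_of_le_mul (h p hp)

end GrandLebesgue

theorem entropy_bound_BGL_general
    {X : Type*} [MeasurableSpace X] (μ : Measure X)
    (a : ℝ) (b : ℝ≥0∞) (ha : 1 ≤ a)
    (ψ ν ζ : ℝ → ℝ) (hψ : IsPsi a b ψ) (hν : IsPsi a b ν)
    (hmul : ∀ p ∈ expSet a b, ζ p = ψ p * ν p)
    (T : Type*)
    (Y : T → X → ℝ) (hYmeas : ∀ t, Measurable (Y t))
    (θ : ℝ)
    (F : ℕ → Finset T)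
    (hcover : ∀ t, ∃ k, t ∈ F k)
    (t₀ : T) (hF0 : F 0 = {t₀})
    (hnet : ∀ k : ℕ, ∀ t : T, ∃ s ∈ F k,
      glNorm μ a b ψ (fun x => Y t x - Y s x) ≤ ENNReal.ofReal (θ ^ k)) :
    glNormE μ a b ζ (fun x => ⨆ t, (Y t x : EReal)) ≤
      glNorm μ a b ψ (Y t₀) +
        ∑' k : ℕ, ENNReal.ofReal (θ ^ k) *
          ⨆ p ∈ expSet a b, ((F (k + 1)).card : ℝ≥0∞) ^ (1 / p) / ENNReal.ofReal (ν p) := by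
  choose π hπ hπ_dist using hnet
  refine glNormE_le_of_forall_lpNormE_le μ fun p hp => ?_
  have hp1 : 1 ≤ p := ha.trans hp.1.le
  have hψp : 0 < ψ p := zero_lt_one.trans_le (hψ.one_le p hp)
  have hνp : 0 < ν p := zero_lt_one.trans_le (hν.one_le p hp)
  have hζp : ENNReal.ofReal (ζ p) = ENNReal.ofReal (ψ p) * ENNReal.ofReal (ν p) := by
    rw [hmul p hp, ENNReal.ofReal_mul hψp.le]
  set Φ : ℕ → ℝ≥0∞ := fun k =>
    ⨆ q ∈ expSet a b, ((F (k + 1)).card : ℝ≥0∞) ^ (1 / q) / ENNReal.ofReal (ν q)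
  have hstart : lpNorm μ (Y t₀) p ≤ glNorm μ a b ψ (Y t₀) * ENNReal.ofReal (ζ p) := by
    grw [lpNorm_le_glNorm_mul μ _ hp hψp, hζp,
      ← le_mul_of_one_le_right' (ENNReal.one_le_ofReal.2 (hν.one_le p hp))]
  have hlink : ∀ k, lpNormNN μ (chainLink Y F π k) p ≤
      ENNReal.ofReal (θ ^ k) * Φ k * ENNReal.ofReal (ζ p) := fun k => calc
    _ ≤ ((F (k + 1)).card : ℝ≥0∞) ^ (1 / p) * (ENNReal.ofReal (θ ^ k) * ENNReal.ofReal (ψ p)) :=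
      lpNormNN_chainLink_le μ hYmeas (zero_lt_one.trans_le hp1) k fun u _ =>
        (lpNorm_le_glNorm_mul μ _ hp hψp).trans (by grw [hπ_dist k u])
    _ ≤ Φ k * ENNReal.ofReal (ν p) * (ENNReal.ofReal (θ ^ k) * ENNReal.ofReal (ψ p)) := by
      grw [← le_iSup₂_div_ofReal_mul _ hp hνp]
    _ = _ := by rw [hζp]; ring
  calc lpNormE μ (fun x => ⨆ t, (Y t x : EReal)) p
      ≤ lpNorm μ (Y t₀) p + ∑' k, lpNormNN μ (chainLink Y F π k) p :=
        lpNormE_iSup_le_add_tsum_chainLink μ hYmeas hp1 hF0 hπ hcover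
    _ ≤ glNorm μ a b ψ (Y t₀) * ENNReal.ofReal (ζ p) +
          ∑' k, ENNReal.ofReal (θ ^ k) * Φ k * ENNReal.ofReal (ζ p) :=
        add_le_add hstart (ENNReal.tsum_le_tsum hlink)
    _ = _ := by rw [ENNReal.tsum_mul_right, add_mul]

/-- Theorem 1 (entropy bound in Bilateral Grand Lebesgue norm). -/
theorem entropy_bound_BGL
    {X : Type*} [MeasurableSpace X] (μ : Measure X) [SigmaFinite μ]
    (a : ℝ) (b : ℝ≥0∞) (ha : 1 ≤ a) (hab : ENNReal.ofReal a < b)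
    (ψ ν ζ : ℝ → ℝ) (hψ : IsPsi a b ψ) (hν : IsPsi a b ν) (hζ : IsPsi a b ζ)
    (hmul : ∀ p ∈ expSet a b, ζ p = ψ p * ν p)
    (T : Type*) [Countable T]
    (Y : T → X → ℝ) (hYmeas : ∀ t, Measurable (Y t))
    (hYfin : ∀ t, glNorm μ a b ψ (Y t) < ⊤)
    (θ : ℝ) (hθ0 : 0 < θ) (hθ1 : θ < 1)
    (F : ℕ → Finset T) (hFmono : Monotone F)
    (hcover : ∀ t, ∃ k, t ∈ F k)
    (t₀ : T) (hF0 : F 0 = {t₀})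
    (hnet : ∀ k : ℕ, ∀ t : T, ∃ s ∈ F k,
      glNorm μ a b ψ (fun x => Y t x - Y s x) ≤ ENNReal.ofReal (θ ^ k)) :
    glNormE μ a b ζ (fun x => ⨆ t, (Y t x : EReal)) ≤
      glNorm μ a b ψ (Y t₀) +
        ∑' k : ℕ, ENNReal.ofReal (θ ^ k) *
          ⨆ p ∈ expSet a b, ((F (k + 1)).card : ℝ≥0∞) ^ (1 / p) / ENNReal.ofReal (ν p) :=
  entropy_bound_BGL_general μ a b ha ψ ν ζ hψ hν hmul T Y hYmeas θ F hcover t₀ hF0 hnet
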